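/- Let K ⊆ ℂ be a nonempty compact convex set, let φ be an entire function of exponential type, and let f ∈ Exp(K). Then the derivative of Φ_φ f equals Φ_φ applied to φ(D)f: (Φ_φ f)' = Φ_φ(φ(D)f) as entire functions; that is, the differentiation operator D is quasi-conjugated to φ(D) by Φ_φ. -/

import Mathlib

open Filter Complex Set

/-- `log` with the convention `log 0 = -∞`, valued in the extended reals. -/
noncomputable def elog (x : ℝ) : EReal :=
  if x = 0 then (⊥ : EReal) else ((Real.log x : ℝ) : EReal)

/-- Maximum modulus `M_f(r) = max_{|z|=r} |f z|`. -/
noncomputable def maxMod (f : ℂ → ℂ) (r : ℝ) : ℝ :=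
  sSup ((fun z => ‖f z‖) '' Metric.sphere (0 : ℂ) r)

/-- The exponential type `τ(f) = limsup_{r→∞} log M_f(r) / r` (valued in `EReal`,
with the convention `log 0 = -∞`; note `log (M_f(r)^{1/r}) = log M_f(r) / r` for `r > 0`). -/
noncomputable def expType (f : ℂ → ℂ) : EReal :=
  Filter.limsup (fun r : ℝ => elog (maxMod f r ^ (1 / r))) Filter.atTop

/-- The indicator function `h_f(θ) = limsup_{r→∞} log |f (r e^{iθ})| / r`. -/
noncomputable def indicatorFn (f : ℂ → ℂ) (θ : ℝ) : EReal :=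
  Filter.limsup
    (fun r : ℝ => elog (‖f ((r : ℂ) * Complex.exp ((θ : ℂ) * Complex.I))‖ ^ (1 / r)))
    Filter.atTop

/-- Support function `H_K(z) = sup {Re (z u) : u ∈ K}`. -/
noncomputable def suppFn (K : Set ℂ) (z : ℂ) : ℝ :=
  sSup ((fun u => (z * u).re) '' K)

/-- The differential operator `φ(D) f = ∑ (φ^{(n)}(0)/n!) f^{(n)}`. -/
noncomputable def phiD (φ : ℂ → ℂ) (f : ℂ → ℂ) : ℂ → ℂ :=
  fun z => ∑' n : ℕ, (iteratedDeriv n φ 0 / (Nat.factorial n : ℂ)) * iteratedDeriv n f z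

/-- The norm `‖f‖_{K,n} = sup_z |f z| e^{-H_K(z) - |z|/n}`. -/
noncomputable def expNorm (K : Set ℂ) (n : ℕ) (f : ℂ → ℂ) : ℝ :=
  sSup (Set.range fun z : ℂ => ‖f z‖ * Real.exp (-suppFn K z - ‖z‖ / (n : ℝ)))

/-- Membership in `Exp(K)`: entire and `‖f‖_{K,n} < ∞` for all `n ≥ 1`. -/
def memExp (K : Set ℂ) (f : ℂ → ℂ) : Prop :=
  Differentiable ℂ f ∧ ∀ n : ℕ, 1 ≤ n →
    BddAbove (Set.range fun z : ℂ =>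
      ‖f z‖ * Real.exp (-suppFn K z - ‖z‖ / (n : ℝ)))

/-- Lower density of a set of natural numbers. -/
noncomputable def lowerDensity (A : Set ℕ) : ℝ :=
  Filter.liminf (fun N : ℕ => ((A ∩ Set.Iic N).ncard : ℝ) / (N : ℝ)) Filter.atTop

/-- `f` is hypercyclic for `φ(D)` on `H(ℂ)`. -/
def HC (φ f : ℂ → ℂ) : Prop :=
  ∀ g : ℂ → ℂ, Differentiable ℂ g → ∀ L : Set ℂ, IsCompact L → ∀ ε : ℝ, 0 < ε →
    ∃ m : ℕ, ∀ z ∈ L, ‖(phiD φ)^[m] f z - g z‖ < ε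

/-- `f` is frequently hypercyclic for `φ(D)` on `H(ℂ)`. -/
def FHC (φ f : ℂ → ℂ) : Prop :=
  ∀ g : ℂ → ℂ, Differentiable ℂ g → ∀ L : Set ℂ, IsCompact L → ∀ ε : ℝ, 0 < ε →
    0 < lowerDensity {m : ℕ | ∀ z ∈ L, ‖(phiD φ)^[m] f z - g z‖ < ε}

/-- `f` is hypercyclic for `φ(D)` on `Exp(K)`. -/
def HCExp (K : Set ℂ) (φ f : ℂ → ℂ) : Prop :=
  memExp K f ∧ ∀ g : ℂ → ℂ, memExp K g → ∀ n : ℕ, 1 ≤ n → ∀ ε : ℝ, 0 < ε →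
    ∃ m : ℕ, expNorm K n (fun z => (phiD φ)^[m] f z - g z) < ε

/-- `f` is frequently hypercyclic for `φ(D)` on `Exp(K)`. -/
def FHCExp (K : Set ℂ) (φ f : ℂ → ℂ) : Prop :=
  memExp K f ∧ ∀ g : ℂ → ℂ, memExp K g → ∀ n : ℕ, 1 ≤ n → ∀ ε : ℝ, 0 < ε →
    0 < lowerDensity {m : ℕ | expNorm K n (fun z => (phiD φ)^[m] f z - g z) < ε}

/-- The Borel transform `Bf(z) = ∑ f^{(n)}(0) z^{-(n+1)}`. -/
noncomputable def borelT (f : ℂ → ℂ) : ℂ → ℂ :=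
  fun z => ∑' n : ℕ, iteratedDeriv n f 0 / z ^ (n + 1)

/-- The transform `Φ_φ f (z) = ∑ (φ(D)^n f)(0) z^n / n!`. -/
noncomputable def PhiT (φ f : ℂ → ℂ) : ℂ → ℂ :=
  fun z => ∑' n : ℕ, ((phiD φ)^[n] f 0) * z ^ n / (Nat.factorial n : ℂ)

/-!
Since `K` is bounded, every `f ∈ Exp(K)` satisfies `|f z| ≤ M e^{A|z|}`, and since `φ` has
exponential type, `|φ z| ≤ C e^{τ|z|}`, so Cauchy's estimate gives `|φ^{(k)}(0)| ≤ C βᵏ` with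
`β = e^τ`. Cauchy's estimate for `g^{(k)}` on circles of radius `2β` makes the `k`-th term of
`φ(D) g` at most `C M e^{A(|z|+2β)} 2⁻ᵏ`, so `φ(D)` maps the class `|g z| ≤ M e^{A|z|}` into
itself with `M` multiplied by a fixed constant `B`. Hence `|(φ(D)ⁿ f)(0)| ≤ M Bⁿ`: the series
defining `Φ_φ f` is dominated by an exponential series, may be differentiated termwise, and
differentiation shifts its coefficients by one.
-/

lemma suppFn_le_mul_norm {K : Set ℂ} {R : ℝ} (hR : 0 ≤ R) (hK : ∀ u ∈ K, ‖u‖ ≤ R) (z : ℂ) :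
    suppFn K z ≤ R * ‖z‖ := by
  refine Real.sSup_le ?_ (by positivity)
  rintro _ ⟨u, hu, rfl⟩
  calc (z * u).re ≤ ‖z * u‖ := re_le_norm _
    _ ≤ R * ‖z‖ := by rw [norm_mul, mul_comm]; gcongr; exact hK u hu

lemma memExp.exists_norm_le_mul_exp {K : Set ℂ} (hK : Bornology.IsBounded K) {f : ℂ → ℂ}
    (hf : memExp K f) : ∃ A M : ℝ, 0 ≤ A ∧ ∀ z, ‖f z‖ ≤ M * Real.exp (A * ‖z‖) := by
  obtain ⟨R, hR, hKR⟩ := hK.exists_pos_norm_le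
  obtain ⟨M, hM⟩ := hf.2 1 le_rfl
  refine ⟨R + 1, M, by positivity, fun z => ?_⟩
  have h : ‖f z‖ * Real.exp (-(suppFn K z + ‖z‖)) ≤ M := by
    simpa [neg_add_eq_sub] using hM ⟨z, rfl⟩
  have hM0 : 0 ≤ M := (mul_nonneg (norm_nonneg _) (Real.exp_pos _).le).trans h
  rw [Real.exp_neg, ← div_eq_mul_inv, div_le_iff₀ (Real.exp_pos _)] at h
  exact h.trans (by gcongr; linarith [suppFn_le_mul_norm hR.le hKR z])

lemma le_exp_mul_of_elog_rpow_lt {x r b : ℝ} (hx : 0 ≤ x) (hr : 0 < r)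
    (h : elog (x ^ (1 / r)) < b) : x ≤ Real.exp (b * r) := by
  rcases hx.eq_or_lt with rfl | hx
  · positivity
  have hxr : 0 < x ^ (1 / r) := Real.rpow_pos_of_pos hx _
  rw [elog, if_neg hxr.ne', EReal.coe_lt_coe_iff, Real.log_lt_iff_lt_exp hxr] at h
  calc x = (x ^ (1 / r)) ^ r := by
        rw [← Real.rpow_mul hx.le, one_div_mul_cancel hr.ne', Real.rpow_one]
    _ ≤ Real.exp b ^ r := Real.rpow_le_rpow (by positivity) h.le hr.le
    _ = Real.exp (b * r) := by rw [← Real.exp_mul]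

lemma norm_le_maxMod {φ : ℂ → ℂ} (hφ : Continuous φ) (z : ℂ) : ‖φ z‖ ≤ maxMod φ ‖z‖ :=
  le_csSup ((isCompact_sphere 0 ‖z‖).image (continuous_norm.comp hφ)).bddAbove
    ⟨z, by simp, rfl⟩

lemma exists_norm_le_mul_exp_of_expType_lt_top {φ : ℂ → ℂ} (hφ : Continuous φ)
    (hτ : expType φ < ⊤) : ∃ C τ : ℝ, 0 ≤ τ ∧ ∀ z, ‖φ z‖ ≤ C * Real.exp (τ * ‖z‖) := by
  obtain ⟨b, hb, -⟩ := EReal.exists_between_coe_real hτ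
  obtain ⟨r₀, hr₀⟩ := (eventually_lt_of_limsup_lt hb).exists_forall_of_atTop
  have hfar : ∀ z : ℂ, max r₀ 1 ≤ ‖z‖ → ‖φ z‖ ≤ Real.exp (b * ‖z‖) := fun z hz =>
    (norm_le_maxMod hφ z).trans <| le_exp_mul_of_elog_rpow_lt
      (Real.sSup_nonneg (by rintro _ ⟨w, -, rfl⟩; positivity))
      (one_pos.trans_le ((le_max_right _ _).trans hz)) (hr₀ _ ((le_max_left _ _).trans hz))
  obtain ⟨C₀, hC₀⟩ := (isCompact_closedBall (0 : ℂ) (max r₀ 1)).exists_bound_of_continuousOn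
    hφ.continuousOn
  refine ⟨max C₀ 1, max b 0, le_max_right _ _, fun z => ?_⟩
  have hexp : 1 ≤ Real.exp (max b 0 * ‖z‖) := Real.one_le_exp (by positivity)
  rcases le_or_gt ‖z‖ (max r₀ 1) with hz | hz
  · calc ‖φ z‖ ≤ max C₀ 1 := (hC₀ z (by simpa using hz)).trans (le_max_left _ _)
      _ ≤ max C₀ 1 * Real.exp (max b 0 * ‖z‖) :=
        le_mul_of_one_le_right (zero_le_one.trans (le_max_right _ _)) hexp
  · calc ‖φ z‖ ≤ Real.exp (max b 0 * ‖z‖) :=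
          (hfar z hz.le).trans (Real.exp_le_exp.2 (by gcongr; exact le_max_left _ _))
      _ ≤ max C₀ 1 * Real.exp (max b 0 * ‖z‖) :=
        le_mul_of_one_le_left (by positivity) (le_max_right _ _)

lemma norm_iteratedDeriv_le_of_norm_le_mul_exp {g : ℂ → ℂ} (hg : Differentiable ℂ g)
    {M A : ℝ} (hA : 0 ≤ A) (hgM : ∀ z, ‖g z‖ ≤ M * Real.exp (A * ‖z‖))
    (k : ℕ) (z : ℂ) {ρ : ℝ} (hρ : 0 < ρ) :
    ‖iteratedDeriv k g z‖ ≤ k.factorial * (M * Real.exp (A * (‖z‖ + ρ))) / ρ ^ k := by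
  have hM : 0 ≤ M := by simpa using (norm_nonneg _).trans (hgM 0)
  refine norm_iteratedDeriv_le_of_forall_mem_sphere_norm_le k hρ hg.diffContOnCl fun w hw => ?_
  have hw : ‖w‖ ≤ ‖z‖ + ρ := by
    simpa [← mem_sphere_iff_norm.1 hw] using norm_le_norm_add_norm_sub' w z
  exact (hgM w).trans (by gcongr)

lemma norm_iteratedDeriv_zero_le_of_norm_le_mul_exp {φ : ℂ → ℂ} (hφ : Differentiable ℂ φ)
    {C τ : ℝ} (hτ : 0 ≤ τ) (hφC : ∀ z, ‖φ z‖ ≤ C * Real.exp (τ * ‖z‖)) (k : ℕ) :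
    ‖iteratedDeriv k φ 0‖ ≤ C * Real.exp τ ^ k := by
  rcases k.eq_zero_or_pos with rfl | hk
  · simpa using hφC 0
  have hC : 0 ≤ C := by simpa using (norm_nonneg _).trans (hφC 0)
  have hk' : (0 : ℝ) < k := by exact_mod_cast hk
  have hcauchy := norm_iteratedDeriv_le_of_norm_le_mul_exp hφ hτ hφC k 0 hk'
  rw [norm_zero, zero_add] at hcauchy
  calc ‖iteratedDeriv k φ 0‖ ≤ k.factorial * (C * Real.exp (τ * k)) / (k : ℝ) ^ k := hcauchy
    _ ≤ (k : ℝ) ^ k * (C * Real.exp (τ * k)) / (k : ℝ) ^ k := by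
        gcongr
        exact_mod_cast k.factorial_le_pow
    _ = C * Real.exp τ ^ k := by
        rw [mul_div_cancel_left₀ _ (by positivity), mul_comm τ, Real.exp_nat_mul]

section PhiD

variable {φ g : ℂ → ℂ} {C β M A : ℝ}

lemma norm_phiD_term_le (hβ : 0 < β) (hA : 0 ≤ A)
    (hφC : ∀ k, ‖iteratedDeriv k φ 0‖ ≤ C * β ^ k)
    (hg : Differentiable ℂ g) (hgM : ∀ z, ‖g z‖ ≤ M * Real.exp (A * ‖z‖)) (z : ℂ) (k : ℕ) :
    ‖iteratedDeriv k φ 0 / k.factorial * iteratedDeriv k g z‖ ≤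
      C * M * Real.exp (A * (‖z‖ + 2 * β)) * (1 / 2) ^ k := by
  have hC : 0 ≤ C := by simpa using (norm_nonneg _).trans (hφC 0)
  rw [norm_mul, norm_div, Complex.norm_natCast]
  calc _ ≤ C * β ^ k / k.factorial *
        (k.factorial * (M * Real.exp (A * (‖z‖ + 2 * β))) / (2 * β) ^ k) := by
        gcongr
        · exact hφC k
        · exact norm_iteratedDeriv_le_of_norm_le_mul_exp hg hA hgM k z (by positivity)
    _ = _ := by rw [mul_pow, one_div, inv_pow]; field_simp

lemma differentiable_phiD (hβ : 0 < β) (hA : 0 ≤ A)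
    (hφC : ∀ k, ‖iteratedDeriv k φ 0‖ ≤ C * β ^ k)
    (hg : Differentiable ℂ g) (hgM : ∀ z, ‖g z‖ ≤ M * Real.exp (A * ‖z‖)) :
    Differentiable ℂ (phiD φ g) := by
  have hM : 0 ≤ M := by simpa using (norm_nonneg _).trans (hgM 0)
  have hC : 0 ≤ C := by simpa using (norm_nonneg _).trans (hφC 0)
  intro z₀
  have hball : DifferentiableOn ℂ (phiD φ g) (Metric.ball 0 (‖z₀‖ + 1)) := by
    refine differentiableOn_tsum_of_summable_norm
      (summable_geometric_two.mul_left (C * M * Real.exp (A * (‖z₀‖ + 1 + 2 * β))))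
      (fun k => ((hg.contDiff.differentiable_iteratedDeriv k
        (WithTop.coe_lt_top _)).const_mul _).differentiableOn) Metric.isOpen_ball
      fun k w hw => (norm_phiD_term_le hβ hA hφC hg hgM w k).trans ?_
    rw [mem_ball_zero_iff] at hw
    gcongr
  exact hball.differentiableAt (Metric.isOpen_ball.mem_nhds (by simp))

lemma norm_phiD_le (hβ : 0 < β) (hA : 0 ≤ A)
    (hφC : ∀ k, ‖iteratedDeriv k φ 0‖ ≤ C * β ^ k)
    (hg : Differentiable ℂ g) (hgM : ∀ z, ‖g z‖ ≤ M * Real.exp (A * ‖z‖)) (z : ℂ) :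
    ‖phiD φ g z‖ ≤ 2 * C * Real.exp (2 * A * β) * M * Real.exp (A * ‖z‖) := by
  calc ‖phiD φ g z‖ ≤ ∑' k : ℕ, C * M * Real.exp (A * (‖z‖ + 2 * β)) * (1 / 2) ^ k :=
        tsum_of_norm_bounded (summable_geometric_two.mul_left _).hasSum
          (norm_phiD_term_le hβ hA hφC hg hgM z)
    _ = _ := by
        rw [tsum_mul_left, tsum_geometric_two, mul_add, Real.exp_add,
          show A * (2 * β) = 2 * A * β by ring]
        ring

lemma iterate_phiD_growth (hβ : 0 < β) (hA : 0 ≤ A)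
    (hφC : ∀ k, ‖iteratedDeriv k φ 0‖ ≤ C * β ^ k)
    (hg : Differentiable ℂ g) (hgM : ∀ z, ‖g z‖ ≤ M * Real.exp (A * ‖z‖)) (n : ℕ) :
    Differentiable ℂ ((phiD φ)^[n] g) ∧ ∀ z, ‖(phiD φ)^[n] g z‖ ≤
      (2 * C * Real.exp (2 * A * β)) ^ n * M * Real.exp (A * ‖z‖) := by
  induction n with
  | zero => simpa using ⟨hg, hgM⟩
  | succ n ih =>
    rw [Function.iterate_succ_apply']
    exact ⟨differentiable_phiD hβ hA hφC ih.1 ih.2,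
      fun z => (norm_phiD_le hβ hA hφC ih.1 ih.2 z).trans_eq (by ring)⟩

end PhiD

lemma deriv_tsum_mul_pow_div_factorial {a : ℕ → ℂ} {M B : ℝ} (ha : ∀ n, ‖a n‖ ≤ M * B ^ n) :
    deriv (fun z => ∑' n, a n * z ^ n / n.factorial) =
      fun z => ∑' n, a (n + 1) * z ^ n / n.factorial := by
  funext x
  have hM : 0 ≤ M := by simpa using (norm_nonneg _).trans (ha 0)
  set F : ℕ → ℂ → ℂ := fun n z => a n * z ^ n / n.factorial
  have hF_le : ∀ n, ∀ w ∈ Metric.ball (0 : ℂ) (‖x‖ + 1),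
      ‖F n w‖ ≤ M * ((|B| * (‖x‖ + 1)) ^ n / n.factorial) := by
    intro n w hw
    rw [mem_ball_zero_iff] at hw
    simp only [F, norm_div, norm_mul, norm_pow, Complex.norm_natCast, mul_pow, ← mul_div_assoc,
      ← mul_assoc]
    gcongr
    exact (ha n).trans (mul_le_mul_of_nonneg_left ((le_abs_self _).trans_eq (abs_pow B n)) hM)
  have hderiv (n : ℕ) : deriv (F n) x = a n * (n * x ^ (n - 1)) / n.factorial :=
    (((hasDerivAt_pow n x).const_mul (a n)).div_const _).deriv
  have hderiv_succ (n : ℕ) : deriv (F (n + 1)) x = a (n + 1) * x ^ n / n.factorial := by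
    rw [hderiv, Nat.factorial_succ, Nat.add_sub_cancel]
    push_cast
    field_simp
  have hsum := hasSum_deriv_of_summable_norm ((Real.summable_pow_div_factorial _).mul_left M)
    (fun n => (by fun_prop : Differentiable ℂ (F n)).differentiableOn) Metric.isOpen_ball hF_le
    (by simp : x ∈ Metric.ball (0 : ℂ) (‖x‖ + 1))
  have hshift := (hasSum_nat_add_iff' 1).mpr hsum
  simp only [Finset.sum_range_one, hderiv 0, hderiv_succ] at hshift
  simpa using hshift.tsum_eq.symm

theorem stmt_14_general (K : Set ℂ) (hKcomp : IsCompact K)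
    (φ : ℂ → ℂ) (hφ : Differentiable ℂ φ) (hφτ : expType φ < ⊤)
    (f : ℂ → ℂ) (hf : memExp K f) :
    deriv (PhiT φ f) = PhiT φ (phiD φ f) := by
  obtain ⟨A, M, hA, hfM⟩ := hf.exists_norm_le_mul_exp hKcomp.isBounded
  obtain ⟨C, τ, hτ, hφC⟩ := exists_norm_le_mul_exp_of_expType_lt_top hφ.continuous hφτ
  have hcoeff := norm_iteratedDeriv_zero_le_of_norm_le_mul_exp hφ hτ hφC
  have hbound (n : ℕ) :
      ‖(phiD φ)^[n] f 0‖ ≤ M * (2 * C * Real.exp (2 * A * Real.exp τ)) ^ n := by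
    simpa [mul_comm] using (iterate_phiD_growth (Real.exp_pos τ) hA hcoeff hf.1 hfM n).2 0
  unfold PhiT
  rw [deriv_tsum_mul_pow_div_factorial hbound]
  simp only [Function.iterate_succ_apply]

/-- `(Φ_φ f)' = Φ_φ (φ(D) f)`, i.e. `D` is quasi-conjugated to `φ(D)` by `Φ_φ`. -/
theorem stmt_14 (K : Set ℂ) (hKne : K.Nonempty) (hKcomp : IsCompact K) (hKconv : Convex ℝ K)
    (φ : ℂ → ℂ) (hφ : Differentiable ℂ φ) (hφτ : expType φ < ⊤)
    (f : ℂ → ℂ) (hf : memExp K f) :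
    deriv (PhiT φ f) = PhiT φ (phiD φ f) :=
  stmt_14_general K hKcomp φ hφ hφτ f hf
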